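/- For any vectors $w_{k-m},\dots,w_k$ and $e_{k-m},\dots,e_k$ in a vector space, defined from sequences $(u_j)$ and $(\tilde u_j)$ by $w_j = \tilde u_j - u_{j-1}$, $e_j = u_j - u_{j-1}$, and with coefficients $\alpha_{k-m},\dots,\alpha_k$ summing to $1$, if additionally $u_k = \sum_{j=k-m}^k \alpha_j \tilde u_j$, then $\sum_{j=k-m}^k \alpha_j w_j = e_k + (1-\alpha_k) e_{k-1} + (1-\alpha_k-\alpha_{k-1}) e_{k-2} + \cdots + (1 - \sum_{j=k-m+1}^k \alpha_j) e_{k-m}$. -/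

import Mathlib

/-!
Since the `α j` sum to one, `∑ α j • w j = u k - ∑ α j • u (j - 1) = ∑ α j • (u k - u (j - 1))`.
Telescoping `u k - u (j - 1) = ∑_{i = j}^{k} e i` and exchanging the two sums (summation by
parts) turns this into `∑ i, (∑_{j ≤ i} α j) • e i`, and `∑_{j ≤ i} α j = 1 - ∑_{j > i} α j`.
-/

open Finset

namespace Int

lemma sum_Icc_add_sum_Icc_add_one {M : Type*} [AddCommMonoid M] (f : ℤ → M) {a i b : ℤ}
    (hai : a ≤ i + 1) (hib : i ≤ b) :
    ∑ j ∈ Icc a i, f j + ∑ j ∈ Icc (i + 1) b, f j = ∑ j ∈ Icc a b, f j := by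
  rw [Icc_add_one_left_eq_Ioc, ← Ioc_sub_one_left_eq_Icc, ← Ioc_sub_one_left_eq_Icc,
    ← sum_union (Ioc_disjoint_Ioc_of_le le_rfl),
    Ioc_union_Ioc_eq_Ioc (by omega) hib]

lemma sum_Icc_sub_sub_one {G : Type*} [AddCommGroup G] (u : ℤ → G) {a b : ℤ} (hab : a ≤ b) :
    ∑ i ∈ Icc a b, (u i - u (i - 1)) = u b - u (a - 1) := by
  induction b, hab using Int.leInduction with
  | base => simp
  | succ b hab ih =>
    rw [← insert_Icc_right_eq_Icc_add_one (by omega), sum_insert (by simp), ih,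
      add_sub_cancel_right]
    abel

variable {R V : Type*} [Semiring R] [AddCommGroup V] [Module R V]

lemma sum_Icc_partialSum_smul_sub_sub_one (α : ℤ → R) (u : ℤ → V) (a b : ℤ) :
    ∑ i ∈ Icc a b, (∑ j ∈ Icc a i, α j) • (u i - u (i - 1))
      = ∑ j ∈ Icc a b, α j • (u b - u (j - 1)) := by
  simp_rw [sum_smul]
  rw [sum_comm' (t' := Icc a b) (s' := fun j => Icc j b)
    (by intro i j; simp only [mem_Icc]; omega)]
  refine sum_congr rfl fun j hj => ?_
  rw [← smul_sum, sum_Icc_sub_sub_one u (mem_Icc.1 hj).2]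

end Int

theorem aa_residual_increment_identity_general
    {V : Type*} [AddCommGroup V] [Module ℝ V]
    (u utld : ℤ → V) (α : ℤ → ℝ) (m k : ℤ)
    (hsum : ∑ j ∈ Finset.Icc (k - m) k, α j = 1)
    (w e : ℤ → V)
    (hw : ∀ j, w j = utld j - u (j - 1))
    (he : ∀ j, e j = u j - u (j - 1))
    (huk : u k = ∑ j ∈ Finset.Icc (k - m) k, α j • utld j) :
    ∑ j ∈ Finset.Icc (k - m) k, α j • w j
      = ∑ i ∈ Finset.Icc (k - m) k, (1 - ∑ j ∈ Finset.Icc (i + 1) k, α j) • e i := by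
  have hcoeff : ∀ i ∈ Icc (k - m) k,
      1 - ∑ j ∈ Icc (i + 1) k, α j = ∑ j ∈ Icc (k - m) i, α j := by
    intro i hi
    obtain ⟨hlo, hhi⟩ := mem_Icc.1 hi
    rw [← hsum, ← Int.sum_Icc_add_sum_Icc_add_one α (by omega) hhi]
    ring
  calc ∑ j ∈ Icc (k - m) k, α j • w j
      = u k - ∑ j ∈ Icc (k - m) k, α j • u (j - 1) := by
        simp only [hw, smul_sub, sum_sub_distrib, huk]
    _ = ∑ j ∈ Icc (k - m) k, α j • (u k - u (j - 1)) := by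
        simp only [smul_sub, sum_sub_distrib, ← sum_smul, hsum, one_smul]
    _ = ∑ i ∈ Icc (k - m) k, (∑ j ∈ Icc (k - m) i, α j) • e i := by
        simp only [he, Int.sum_Icc_partialSum_smul_sub_sub_one]
    _ = ∑ i ∈ Icc (k - m) k, (1 - ∑ j ∈ Icc (i + 1) k, α j) • e i :=
        sum_congr rfl fun i hi => by rw [hcoeff i hi]

/-- Anderson acceleration residual–increment identity (Lemma 3.2). -/
theorem aa_residual_increment_identity
    {V : Type*} [AddCommGroup V] [Module ℝ V]
    (u utld : ℤ → V) (α : ℤ → ℝ) (m k : ℤ)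
    (hm : 1 ≤ m) (hk : m ≤ k)
    (hsum : ∑ j ∈ Finset.Icc (k - m) k, α j = 1)
    (w e : ℤ → V)
    (hw : ∀ j, w j = utld j - u (j - 1))
    (he : ∀ j, e j = u j - u (j - 1))
    (huk : u k = ∑ j ∈ Finset.Icc (k - m) k, α j • utld j) :
    ∑ j ∈ Finset.Icc (k - m) k, α j • w j
      = ∑ i ∈ Finset.Icc (k - m) k, (1 - ∑ j ∈ Finset.Icc (i + 1) k, α j) • e i :=
  aa_residual_increment_identity_general u utld α m k hsum w e hw he huk
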